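/- For the two-parameter family 𝔤(λ,μ), the Ricci tensor ρ(y,z) = Σ_i ε_i R(X_i, y, z, X_i) (with ε₁ = ε₂ = 1, ε₃ = ε₄ = −1) has components ρ₁₁ = ρ₂₂ = −4λ², ρ₃₃ = ρ₄₄ = −4μ², ρ₁₂ = ρ₃₄ = −2(λ² + μ²), ρ₁₃ = ρ₁₄ = ρ₂₃ = ρ₂₄ = 4λμ, and the scalar curvatures are τ = Σ_i ε_i ρ(X_i,X_i) = −8(λ² − μ²) and τ* = Σ_i ε_i ρ(X_i, JX_i) = 16λμ. -/
import Mathlib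


noncomputable section

namespace Norden

/-- The underlying 4-dimensional real vector space. -/
abbrev V : Type := Fin 4 → ℝ

/-- The basis `X₁, X₂, X₃, X₄` (0-indexed as `X 0, X 1, X 2, X 3`). -/
def X (i : Fin 4) : V := Pi.single i 1

/-- The signature signs `ε₁ = ε₂ = 1`, `ε₃ = ε₄ = -1` of the Norden metric. -/
def eps : Fin 4 → ℝ := ![1, 1, -1, -1]

/-- The Norden metric `g`, diagonal with entries `ε_i` in the basis `X`. -/
def g (x y : V) : ℝ := ∑ i, eps i * x i * y i

/-- The almost complex structure `J` with `JX₁ = X₃`, `JX₂ = X₄`, `JX₃ = -X₁`, `JX₄ = -X₂`. -/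
def J (x : V) : V := ![-x 2, -x 3, x 0, x 1]

/-- The bracket of the two-parameter family `𝔤(λ,μ)`: the antisymmetric bilinear map with
`[X₁,X₂] = λX₁ - λX₂`, `[X₁,X₃] = μX₂ + λX₄`, `[X₁,X₄] = μX₂ + λX₃`,
`[X₂,X₃] = μX₁ + λX₄`, `[X₂,X₄] = μX₁ + λX₃`, `[X₃,X₄] = -μX₃ + μX₄`. -/
def br (l m : ℝ) (x y : V) : V :=
  ![l * (x 0 * y 1 - x 1 * y 0) + m * (x 1 * y 2 - x 2 * y 1) + m * (x 1 * y 3 - x 3 * y 1),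
    -l * (x 0 * y 1 - x 1 * y 0) + m * (x 0 * y 2 - x 2 * y 0) + m * (x 0 * y 3 - x 3 * y 0),
    l * (x 0 * y 3 - x 3 * y 0) + l * (x 1 * y 3 - x 3 * y 1) - m * (x 2 * y 3 - x 3 * y 2),
    l * (x 0 * y 2 - x 2 * y 0) + l * (x 1 * y 2 - x 2 * y 1) + m * (x 2 * y 3 - x 3 * y 2)]

/-- The Koszul (Levi-Civita) connection: the unique bilinear map with
`2g(∇ₓy, z) = g([x,y],z) + g([z,x],y) + g([z,y],x)`, written out componentwise using
that `g` is diagonal with entries `ε_k` (so `v_k = ε_k g(v, X_k)`). -/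
def nabla (l m : ℝ) (x y : V) : V :=
  fun k => eps k * (1 / 2) *
    (g (br l m x y) (X k) + g (br l m (X k) x) y + g (br l m (X k) y) x)

/-- The tensor `F(x,y,z) = g((∇ₓJ)y, z) = g(∇ₓ(Jy) - J(∇ₓy), z)`. -/
def F (l m : ℝ) (x y z : V) : ℝ := g (nabla l m x (J y) - J (nabla l m x y)) z

/-- The curvature tensor `R(x,y,z,u) = g(∇ₓ∇_y z - ∇_y∇ₓ z - ∇_{[x,y]} z, u)`. -/
def R (l m : ℝ) (x y z u : V) : ℝ :=
  g (nabla l m x (nabla l m y z) - nabla l m y (nabla l m x z) - nabla l m (br l m x y) z) u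

/-- The Ricci tensor `ρ(y,z) = Σ_i ε_i R(X_i, y, z, X_i)`. -/
def ric (l m : ℝ) (y z : V) : ℝ := ∑ i, eps i * R l m (X i) y z (X i)

/-- The scalar curvature `τ = Σ_i ε_i ρ(X_i, X_i)`. -/
def tau (l m : ℝ) : ℝ := ∑ i, eps i * ric l m (X i) (X i)

/-- The associated scalar curvature `τ* = Σ_i ε_i ρ(X_i, JX_i)`. -/
def tauStar (l m : ℝ) : ℝ := ∑ i, eps i * ric l m (X i) (J (X i))

/-- The curvature-like tensor `ψ₁(S)` associated with a symmetric `(0,2)`-tensor `S`. -/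
def psi1 (S : V → V → ℝ) (x y z u : V) : ℝ :=
  g y z * S x u - g x z * S y u + g x u * S y z - g y u * S x z

/-- The tensor `π₁ = (1/2)ψ₁(g)`, i.e. `π₁(x,y,z,u) = g(y,z)g(x,u) - g(x,z)g(y,u)`. -/
def pi1 (x y z u : V) : ℝ := g y z * g x u - g x z * g y u

/-- The Weyl tensor in dimension 4: `W = R - (1/2){ψ₁(ρ) - (τ/3)π₁}`. -/
def W (l m : ℝ) (x y z u : V) : ℝ :=
  R l m x y z u - (1 / 2) * (psi1 (ric l m) x y z u - (tau l m / 3) * pi1 x y z u)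

/-- The square norm `‖∇J‖² = Σ_{i,k,p} ε_i ε_k ε_p F(X_i,X_k,X_p)²`. -/
def normNablaJSq (l m : ℝ) : ℝ :=
  ∑ i, ∑ k, ∑ p, eps i * eps k * eps p * (F l m (X i) (X k) (X p)) ^ 2

/-- The Nijenhuis tensor `N(x,y) = [Jx,Jy] - [x,y] - J[Jx,y] - J[x,Jy]`. -/
def Nij (l m : ℝ) (x y : V) : V :=
  br l m (J x) (J y) - br l m x y - J (br l m (J x) y) - J (br l m x (J y))

/-- The Lie form `θ(x) = Σ_i ε_i F(X_i, X_i, x)` (the `g`-trace of `F`). -/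
def theta (l m : ℝ) (x : V) : ℝ :=
  F l m (X 0) (X 0) x + F l m (X 1) (X 1) x - F l m (X 2) (X 2) x - F l m (X 3) (X 3) x

end Norden

end

open Norden in
section
open Norden
lemma Norden.nabla_eq (l m : ℝ) (x y : V) : nabla l m x y =
    ![l * (x 0 * y 1 - x 1 * y 1) - l * (x 2 * y 3 + x 3 * y 2) + m * x 1 * (y 2 + y 3),
      l * (x 1 * y 0 - x 0 * y 0) - l * (x 2 * y 3 + x 3 * y 2) + m * x 0 * (y 2 + y 3),
      m * (x 3 * y 3 - x 2 * y 3) + m * (x 1 * y 0 + x 0 * y 1) - l * x 3 * (y 0 + y 1),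
      m * (x 2 * y 2 - x 3 * y 2) + m * (x 1 * y 0 + x 0 * y 1) - l * x 2 * (y 0 + y 1)] := by
  funext k
  fin_cases k <;>
    (simp [nabla, g, br, X, eps, Fin.sum_univ_four, Pi.single_apply]; ring)

lemma Norden.X0_eq : X 0 = ![1,0,0,0] := by funext k; fin_cases k <;> simp [X, Pi.single_apply]
lemma Norden.X1_eq : X 1 = ![0,1,0,0] := by funext k; fin_cases k <;> simp [X, Pi.single_apply]
lemma Norden.X2_eq : X 2 = ![0,0,1,0] := by funext k; fin_cases k <;> simp [X, Pi.single_apply]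
lemma Norden.X3_eq : X 3 = ![0,0,0,1] := by funext k; fin_cases k <;> simp [X, Pi.single_apply]

set_option maxHeartbeats 2000000 in
lemma Norden.ric_eq (l m : ℝ) (y z : V) : ric l m y z =
    -4 * l ^ 2 * (y 0 * z 0 + y 1 * z 1) - 4 * m ^ 2 * (y 2 * z 2 + y 3 * z 3)
    - 2 * (l ^ 2 + m ^ 2) * (y 0 * z 1 + y 1 * z 0 + y 2 * z 3 + y 3 * z 2)
    + 4 * l * m * (y 0 * z 2 + y 2 * z 0 + y 0 * z 3 + y 3 * z 0
        + y 1 * z 2 + y 2 * z 1 + y 1 * z 3 + y 3 * z 1) := by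
  simp only [ric, R, Fin.sum_univ_four, X0_eq, X1_eq, X2_eq, X3_eq, nabla_eq, br, g, eps,
    Pi.sub_apply, Matrix.cons_val_zero, Matrix.cons_val_one, Matrix.head_cons,
    Matrix.cons_val_two, Matrix.tail_cons, Matrix.cons_val_three]
  ring

end

open Norden in
/-- For the family `𝔤(λ,μ)`, the Ricci tensor has components
`ρ₁₁ = ρ₂₂ = -4λ²`, `ρ₃₃ = ρ₄₄ = -4μ²`, `ρ₁₂ = ρ₃₄ = -2(λ² + μ²)`,
`ρ₁₃ = ρ₁₄ = ρ₂₃ = ρ₂₄ = 4λμ`, and the scalar curvatures are `τ = -8(λ² - μ²)` and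
`τ* = 16λμ`. -/
theorem statement9 (l m : ℝ) :
    (ric l m (X 0) (X 0) = -4 * l ^ 2 ∧ ric l m (X 1) (X 1) = -4 * l ^ 2) ∧
    (ric l m (X 2) (X 2) = -4 * m ^ 2 ∧ ric l m (X 3) (X 3) = -4 * m ^ 2) ∧
    (ric l m (X 0) (X 1) = -2 * (l ^ 2 + m ^ 2) ∧ ric l m (X 2) (X 3) = -2 * (l ^ 2 + m ^ 2)) ∧
    (ric l m (X 0) (X 2) = 4 * l * m ∧ ric l m (X 0) (X 3) = 4 * l * m ∧
     ric l m (X 1) (X 2) = 4 * l * m ∧ ric l m (X 1) (X 3) = 4 * l * m) ∧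
    tau l m = -8 * (l ^ 2 - m ^ 2) ∧
    tauStar l m = 16 * l * m := by
  refine ⟨⟨?_, ?_⟩, ⟨?_, ?_⟩, ⟨?_, ?_⟩, ⟨?_, ?_, ?_, ?_⟩, ?_, ?_⟩ <;>
    simp [tau, tauStar, ric_eq, J, Fin.sum_univ_four, X0_eq, X1_eq, X2_eq, X3_eq, eps] <;>
    ring
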